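/- For every N ≥ 1, β > 0 and J > 0, the Curie–Weiss pressure satisfies the upper bound (1/N) ln Z_N(β) ≤ ln(2N+1)/N + sup_{m̃ ∈ [-1,1]} { ln 2 + ln cosh(βJ m̃) − (βJ/2) m̃² }. -/

import Mathlib

open Real

/-- The value of a spin: `true ↦ 1`, `false ↦ -1`. -/
noncomputable def spin (b : Bool) : ℝ := if b then 1 else -1

/-- The magnetization per spin of a configuration `σ ∈ {-1,1}^N`. -/
noncomputable def mag (N : ℕ) (σ : Fin N → Bool) : ℝ := (1 / (N : ℝ)) * ∑ i, spin (σ i)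

/-- The Curie–Weiss partition function `Z_N(β) = ∑_σ exp((βJN/2) m(σ)²)`. -/
noncomputable def Zcw (N : ℕ) (J β : ℝ) : ℝ :=
  ∑ σ : Fin N → Bool, Real.exp (β * J * (N : ℝ) / 2 * (mag N σ) ^ 2)

/-!
Group the configurations by magnetization. On the fibre `{m(σ) = m}` the weight
`exp (K N m(σ)² / 2)` equals `exp (-K N m² / 2) · exp (K m ∑ᵢ σᵢ)`; extending the sum of the
second factor to all configurations gives `(2 cosh (K m))ᴺ`, so each fibre contributes at most
`exp (N φ(m))` with `φ(m) = ln 2 + ln cosh (K m) - K m² / 2`. There are at most `N + 1` fibres.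
-/

open Finset

noncomputable def meanFieldPressure (K m : ℝ) : ℝ :=
  log 2 + log (cosh (K * m)) - K / 2 * m ^ 2

lemma continuous_meanFieldPressure (K : ℝ) : Continuous (meanFieldPressure K) := by
  unfold meanFieldPressure
  have := fun m => (cosh_pos (K * m)).ne'
  fun_prop (disch := assumption)

lemma exp_mul_meanFieldPressure (N : ℕ) (K m : ℝ) :
    exp (N * meanFieldPressure K m) = exp (-(K * N / 2 * m ^ 2)) * (2 * cosh (K * m)) ^ N := by
  have hlog : log 2 + log (cosh (K * m)) = log (2 * cosh (K * m)) :=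
    (log_mul two_ne_zero (cosh_pos _).ne').symm
  have hsplit : N * meanFieldPressure K m
      = -(K * N / 2 * m ^ 2) + N * log (2 * cosh (K * m)) := by
    rw [meanFieldPressure, hlog]; ring
  rw [hsplit, exp_add, exp_nat_mul, exp_log (by positivity)]

section Spins

variable {N : ℕ}

lemma sum_spin_eq (σ : Fin N → Bool) : ∑ i, spin (σ i) = 2 * #{i | σ i} - N := by
  have h : ∀ b, spin b = 2 * (if b then 1 else 0) - 1 := by
    intro b; cases b <;> norm_num [spin]
  simp_rw [h, sum_sub_distrib, ← mul_sum, sum_boole]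
  simp

lemma mag_eq (σ : Fin N → Bool) : mag N σ = (2 * #{i | σ i} - N) / N := by
  rw [mag, sum_spin_eq, one_div_mul_eq_div]

lemma natCast_mul_mag (σ : Fin N → Bool) : N * mag N σ = ∑ i, spin (σ i) := by
  rcases N.eq_zero_or_pos with rfl | hN
  · simp
  · rw [mag, ← mul_assoc, mul_one_div_cancel (by positivity), one_mul]

lemma cast_card_filter_le (σ : Fin N → Bool) : (#{i | σ i} : ℝ) ≤ N := by
  exact_mod_cast (card_filter_le _ _).trans_eq (card_fin N)

lemma mag_mem_Icc (σ : Fin N → Bool) : mag N σ ∈ Set.Icc (-1 : ℝ) 1 := by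
  rcases N.eq_zero_or_pos with rfl | hN
  · simp [mag]
  have hN' : (0 : ℝ) < N := by exact_mod_cast hN
  have hc := cast_card_filter_le σ
  have hc0 : (0 : ℝ) ≤ #{i | σ i} := by positivity
  rw [mag_eq, Set.mem_Icc, le_div_iff₀ hN', div_le_iff₀ hN']
  constructor <;> linarith

lemma card_image_mag_le : #(univ.image (mag N)) ≤ N + 1 := by
  have hsub : univ.image (mag N) ⊆
      (range (N + 1)).image (fun k : ℕ => (2 * (k : ℝ) - N) / N) := by
    intro _ hm
    obtain ⟨σ, -, rfl⟩ := mem_image.mp hm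
    refine mem_image.mpr ⟨#{i | σ i}, mem_range.mpr (Nat.lt_succ_of_le ?_), (mag_eq σ).symm⟩
    exact_mod_cast cast_card_filter_le σ
  exact (card_le_card hsub).trans (card_image_le.trans (card_range _).le)

lemma sum_exp_mul_sum_spin (x : ℝ) :
    ∑ σ : Fin N → Bool, exp (x * ∑ i, spin (σ i)) = (2 * cosh x) ^ N := by
  have hpair : ∑ b : Bool, exp (x * spin b) = 2 * cosh x := by
    rw [Fintype.sum_bool, cosh_eq, mul_div_cancel₀ _ two_ne_zero]
    norm_num [spin]
  simp_rw [mul_sum, exp_sum, ← hpair]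
  exact (Fintype.sum_pow (fun b => exp (x * spin b)) N).symm

lemma sum_filter_mag_eq_le (K m : ℝ) :
    ∑ σ with mag N σ = m, exp (K * N / 2 * mag N σ ^ 2) ≤ exp (N * meanFieldPressure K m) := by
  have hterm : ∀ σ ∈ ({σ | mag N σ = m} : Finset (Fin N → Bool)),
      exp (K * N / 2 * mag N σ ^ 2)
        = exp (-(K * N / 2 * m ^ 2)) * exp (K * m * ∑ i, spin (σ i)) := by
    intro σ hσ
    rw [← (mem_filter.mp hσ).2, ← exp_add, ← natCast_mul_mag]
    congr 1
    ring
  calc ∑ σ with mag N σ = m, exp (K * N / 2 * mag N σ ^ 2)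
      = ∑ σ with mag N σ = m, exp (-(K * N / 2 * m ^ 2)) * exp (K * m * ∑ i, spin (σ i)) :=
        sum_congr rfl hterm
    _ ≤ ∑ σ : Fin N → Bool, exp (-(K * N / 2 * m ^ 2)) * exp (K * m * ∑ i, spin (σ i)) :=
        sum_le_sum_of_subset_of_nonneg (filter_subset _ _) fun _ _ _ => by positivity
    _ = exp (N * meanFieldPressure K m) := by
        rw [← mul_sum, sum_exp_mul_sum_spin, exp_mul_meanFieldPressure]

lemma Zcw_le (J β : ℝ) :
    Zcw N J β ≤ (N + 1) * exp (N * sSup (meanFieldPressure (β * J) '' Set.Icc (-1) 1)) := by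
  set S := sSup (meanFieldPressure (β * J) '' Set.Icc (-1) 1)
  have hbdd : BddAbove (meanFieldPressure (β * J) '' Set.Icc (-1) 1) :=
    (isCompact_Icc.image (continuous_meanFieldPressure _)).bddAbove
  calc Zcw N J β
      = ∑ m ∈ univ.image (mag N), ∑ σ with mag N σ = m, exp (β * J * N / 2 * mag N σ ^ 2) :=
        (sum_fiberwise_of_maps_to (fun σ _ => mem_image_of_mem _ (mem_univ σ)) _).symm
    _ ≤ ∑ _m ∈ univ.image (mag N), exp (N * S) := by
        refine sum_le_sum fun m hm => (sum_filter_mag_eq_le _ m).trans ?_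
        obtain ⟨σ, -, rfl⟩ := mem_image.mp hm
        gcongr
        exact le_csSup hbdd (Set.mem_image_of_mem _ (mag_mem_Icc σ))
    _ ≤ (N + 1) * exp (N * S) := by
        rw [sum_const, nsmul_eq_mul]
        gcongr
        exact_mod_cast card_image_mag_le

end Spins

theorem cw_upper_bound_general (N : ℕ) (hN : 1 ≤ N) (β J : ℝ) :
    (1 / (N : ℝ)) * Real.log (Zcw N J β) ≤
      Real.log (2 * (N : ℝ) + 1) / (N : ℝ) +
        sSup ((fun mt : ℝ =>
          Real.log 2 + Real.log (Real.cosh (β * J * mt)) - β * J / 2 * mt ^ 2) ''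
            Set.Icc (-1 : ℝ) 1) := by
  change _ ≤ _ + sSup (meanFieldPressure (β * J) '' _)
  set S := sSup (meanFieldPressure (β * J) '' Set.Icc (-1) 1)
  have hN' : (0 : ℝ) < N := by exact_mod_cast hN
  have hZ : 0 < Zcw N J β := sum_pos (fun _ _ => exp_pos _) univ_nonempty
  have hlog : log (Zcw N J β) ≤ log (2 * N + 1) + N * S :=
    calc log (Zcw N J β) ≤ log ((N + 1) * exp (N * S)) := log_le_log hZ (Zcw_le J β)
      _ = log (N + 1) + N * S := by rw [log_mul (by positivity) (exp_pos _).ne', log_exp]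
      _ ≤ log (2 * N + 1) + N * S := by gcongr; linarith
  calc 1 / (N : ℝ) * log (Zcw N J β) ≤ 1 / N * (log (2 * N + 1) + N * S) := by gcongr
    _ = log (2 * N + 1) / N + S := by field_simp

/-- For every `N ≥ 1`, `β > 0` and `J > 0`, the Curie–Weiss pressure satisfies
`(1/N) ln Z_N(β) ≤ ln(2N+1)/N + sup_{m̃ ∈ [-1,1]} { ln 2 + ln cosh(βJ m̃) − (βJ/2) m̃² }`. -/
theorem cw_upper_bound (N : ℕ) (hN : 1 ≤ N) (β J : ℝ) (hβ : 0 < β) (hJ : 0 < J) :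
    (1 / (N : ℝ)) * Real.log (Zcw N J β) ≤
      Real.log (2 * (N : ℝ) + 1) / (N : ℝ) +
        sSup ((fun mt : ℝ =>
          Real.log 2 + Real.log (Real.cosh (β * J * mt)) - β * J / 2 * mt ^ 2) ''
            Set.Icc (-1 : ℝ) 1) :=
  cw_upper_bound_general N hN β J
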